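/- Let p be an odd prime and let r ≥ 1. Then the number of cyclic subgroups of the group T_{4·2^r} × C_p of order 2^{r+2}·p equals 2(2^r + r + 2); equivalently, it equals 2^{r+2}·p − t where t = 2^{r+1}(2p − 1) − 2(r + 2). -/

import Mathlib

open Subgroup QuaternionGroup

section Generic

variable {X Y : Type*} [Group X] [Group Y]

lemma aux_isCyclic_zpowers (x : X) : IsCyclic (zpowers x) := by
  refine ⟨⟨⟨x, mem_zpowers x⟩, fun y => ?_⟩⟩
  obtain ⟨k, hk⟩ := y.2
  exact ⟨k, Subtype.ext (by simpa using hk)⟩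

lemma aux_mem_range_zpowers_iff_isCyclic (H : Subgroup X) :
    H ∈ Set.range (fun x : X => zpowers x) ↔ IsCyclic H := by
  constructor
  · rintro ⟨x, rfl⟩; exact aux_isCyclic_zpowers x
  · rintro h
    obtain ⟨g, hg⟩ := h.exists_generator
    refine ⟨g, le_antisymm (zpowers_le.mpr g.2) (fun y hy => ?_)⟩
    obtain ⟨k, hk⟩ := hg ⟨y, hy⟩
    exact ⟨k, by simpa using congrArg Subtype.val hk⟩

lemma aux_card_cyclic_subgroups (X : Type*) [Group X] :
    Nat.card {H : Subgroup X // IsCyclic H} =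
      (Set.range (fun x : X => zpowers x)).ncard := by
  rw [← Nat.card_coe_set_eq]
  exact Nat.card_congr (Equiv.subtypeEquivRight
    (fun H => (aux_mem_range_zpowers_iff_isCyclic H).symm))

lemma aux_zpowers_prod_eq {x : X} {y : Y} (h : Nat.Coprime (orderOf x) (orderOf y)) :
    zpowers (x, y) = (zpowers x).prod (zpowers y) := by
  obtain ⟨u, v, huv⟩ := (Int.isCoprime_iff_gcd_eq_one.mpr (by exact_mod_cast h)
    : IsCoprime (orderOf x : ℤ) (orderOf y : ℤ))
  have hx1 : (x : X) ^ (orderOf x : ℤ) = 1 := by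
    rw [zpow_natCast]; exact pow_orderOf_eq_one x
  have hy1 : (y : Y) ^ (orderOf y : ℤ) = 1 := by
    rw [zpow_natCast]; exact pow_orderOf_eq_one y
  have hfst : (x, (1 : Y)) ∈ zpowers (x, y) := by
    refine ⟨v * (orderOf y : ℤ), ?_⟩
    have h1 : x ^ (v * (orderOf y : ℤ)) = x := by
      have : (v * (orderOf y : ℤ)) = 1 - (orderOf x : ℤ) * u := by linarith
      rw [this, zpow_sub, zpow_one, zpow_mul, hx1, one_zpow, inv_one, mul_one]
    have h2 : y ^ (v * (orderOf y : ℤ)) = 1 := by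
      rw [mul_comm, zpow_mul, hy1, one_zpow]
    exact Prod.ext h1 h2
  have hsnd : ((1 : X), y) ∈ zpowers (x, y) := by
    refine ⟨u * (orderOf x : ℤ), ?_⟩
    have h1 : x ^ (u * (orderOf x : ℤ)) = 1 := by
      rw [mul_comm, zpow_mul, hx1, one_zpow]
    have h2 : y ^ (u * (orderOf x : ℤ)) = y := by
      have : (u * (orderOf x : ℤ)) = 1 - (orderOf y : ℤ) * v := by linarith
      rw [this, zpow_sub, zpow_one, zpow_mul, hy1, one_zpow, inv_one, mul_one]
    exact Prod.ext h1 h2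
  refine le_antisymm (zpowers_le.mpr ⟨mem_zpowers x, mem_zpowers y⟩) ?_
  rintro ⟨a, b⟩ ⟨⟨j, hj⟩, ⟨k, hk⟩⟩
  have ha : ((a : X), (1 : Y)) ∈ zpowers (x, y) := by
    have := Subgroup.zpow_mem _ hfst j
    simpa [hj] using this
  have hb : ((1 : X), (b : Y)) ∈ zpowers (x, y) := by
    have := Subgroup.zpow_mem _ hsnd k
    simpa [hk] using this
  have := Subgroup.mul_mem _ ha hb
  simpa using this

lemma aux_prod_injective2 {A A' : Subgroup X} {B B' : Subgroup Y}
    (h : A.prod B = A'.prod B') : A = A' ∧ B = B' := by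
  constructor
  · ext u
    have h1 := Subgroup.ext_iff.mp h (u, 1)
    simpa [Subgroup.mem_prod, B.one_mem, B'.one_mem] using h1
  · ext v
    have h1 := Subgroup.ext_iff.mp h (1, v)
    simpa [Subgroup.mem_prod, A.one_mem, A'.one_mem] using h1

lemma aux_range_zpowers_prod (hco : Nat.Coprime (Nat.card X) (Nat.card Y))
    [Finite X] [Finite Y] :
    (Set.range (fun z : X × Y => zpowers z)).ncard =
      (Set.range (fun x : X => zpowers x)).ncard *
        (Set.range (fun y : Y => zpowers y)).ncard := by
  have hcop : ∀ (x : X) (y : Y), Nat.Coprime (orderOf x) (orderOf y) := fun x y =>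
    Nat.Coprime.coprime_dvd_left (orderOf_dvd_natCard x)
      (Nat.Coprime.coprime_dvd_right (orderOf_dvd_natCard y) hco)
  have hrange : Set.range (fun z : X × Y => zpowers z) =
      (fun AB : Subgroup X × Subgroup Y => AB.1.prod AB.2) ''
        (Set.range (fun x : X => zpowers x) ×ˢ Set.range (fun y : Y => zpowers y)) := by
    ext H
    constructor
    · rintro ⟨⟨x, y⟩, rfl⟩
      exact ⟨(zpowers x, zpowers y), ⟨⟨x, rfl⟩, ⟨y, rfl⟩⟩, (aux_zpowers_prod_eq (hcop x y)).symm⟩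
    · rintro ⟨⟨A, B⟩, ⟨⟨x, hx⟩, ⟨y, hy⟩⟩, rfl⟩
      refine ⟨(x, y), ?_⟩
      simp only at hx hy ⊢
      rw [← hx, ← hy]
      exact aux_zpowers_prod_eq (hcop x y)
  rw [hrange, Set.ncard_image_of_injective _ (fun AB AB' h => by
    obtain ⟨h1, h2⟩ := aux_prod_injective2 h
    exact Prod.ext h1 h2)]
  rw [← Nat.card_coe_set_eq, Nat.card_congr (Equiv.Set.prod _ _), Nat.card_prod,
    Nat.card_coe_set_eq, Nat.card_coe_set_eq]

lemma aux_range_zpowers_zmod (p : ℕ) (hp : p.Prime) :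
    (Set.range (fun y : Multiplicative (ZMod p) => zpowers y)).ncard = 2 := by
  haveI : Fact p.Prime := ⟨hp⟩
  have hcard : Nat.card (Multiplicative (ZMod p)) = p := by
    simp [Nat.card_eq_fintype_card]
  haveI : Nontrivial (Multiplicative (ZMod p)) := by
    have : Nontrivial (ZMod p) := by
      haveI : Fact (1 < p) := ⟨hp.one_lt⟩
      infer_instance
    exact this
  have hrange : Set.range (fun y : Multiplicative (ZMod p) => zpowers y) =
      {⊥, ⊤} := by
    ext H
    constructor
    · rintro ⟨y, rfl⟩
      by_cases hy : y = 1
      · left; simp [hy]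
      · right; exact zpowers_eq_top_of_prime_card hcard hy
    · rintro (rfl | rfl)
      · exact ⟨1, by simp⟩
      · obtain ⟨y, hy⟩ := exists_ne (1 : Multiplicative (ZMod p))
        exact ⟨y, zpowers_eq_top_of_prime_card hcard hy⟩
  rw [hrange, Set.ncard_pair]
  intro h
  obtain ⟨y, hy⟩ := exists_ne (1 : Multiplicative (ZMod p))
  exact hy ((Subgroup.mem_bot).mp (h ▸ Subgroup.mem_top y))

lemma aux_subgroup_eq_of_card_eq {α : Type*} [Group α] [Fintype α] [IsCyclic α]
    {H K : Subgroup α} (h : Nat.card H = Nat.card K) : H = K := by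
  classical
  have key : ∀ (H : Subgroup α), (H : Set α) = {x : α | x ^ (Nat.card H) = 1} := by
    intro H
    have hle : (H : Set α) ⊆ {x : α | x ^ (Nat.card H) = 1} := by
      intro x hx
      have h1 : (⟨x, hx⟩ : H) ^ (Nat.card H) = 1 := pow_card_eq_one'
      have h2 := congrArg (Subtype.val) h1
      rw [SubmonoidClass.coe_pow] at h2
      exact h2
    have hpos : 0 < Nat.card H := Nat.card_pos
    have hfin : {x : α | x ^ (Nat.card H) = 1}.Finite := Set.toFinite _
    have hcard : {x : α | x ^ (Nat.card H) = 1}.ncard ≤ Nat.card H := by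
      have := IsCyclic.card_pow_eq_one_le (α := α) hpos
      calc {x : α | x ^ (Nat.card H) = 1}.ncard
          = ({a : α | a ^ (Nat.card H) = 1} : Finset α).card := by
            rw [← Set.ncard_coe_finset]; congr 1; ext x; simp
        _ ≤ Nat.card H := this
    refine (Set.eq_of_subset_of_ncard_le hle ?_ hfin).symm ▸ rfl
    calc {x : α | x ^ (Nat.card H) = 1}.ncard ≤ Nat.card H := hcard
      _ = (H : Set α).ncard := by rw [← Nat.card_coe_set_eq]; rfl
  have : (H : Set α) = (K : Set α) := by rw [key H, key K, h]
  exact SetLike.coe_injective this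

end Generic

section Quaternion

variable {n : ℕ} [NeZero n]

lemma aux_xa_pow_three (i : ZMod (2 * n)) :
    (xa i : QuaternionGroup n) ^ 3 = xa (i + (n : ZMod (2 * n))) := by
  rw [pow_succ, xa_sq, a_mul_xa]
  congr 1
  have h : ((2 * n : ℕ) : ZMod (2 * n)) = 0 := ZMod.natCast_self _
  push_cast at h
  rw [sub_eq_add_neg]
  congr 1
  linear_combination -h

lemma aux_mem_zpowers_xa {i : ZMod (2 * n)} {g : QuaternionGroup n} :
    g ∈ zpowers (xa i) ↔
      g = 1 ∨ g = a n ∨ g = xa i ∨ g = xa (i + (n : ZMod (2 * n))) := by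
  constructor
  · intro hg
    obtain ⟨m, hm⟩ := mem_powers_iff_mem_zpowers.mpr hg
    change (xa i) ^ m = g at hm
    rw [← pow_mod_orderOf, orderOf_xa] at hm
    have h4 : m % 4 < 4 := Nat.mod_lt _ (by norm_num)
    interval_cases h : (m % 4)
    · left; rw [← hm, pow_zero]
    · right; right; left; rw [← hm, pow_one]
    · right; left; rw [← hm, xa_sq]
    · right; right; right; rw [← hm, aux_xa_pow_three]
  · rintro (rfl | rfl | rfl | rfl)
    · exact one_mem _
    · exact mem_powers_iff_mem_zpowers.mp ⟨2, xa_sq i⟩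
    · exact mem_zpowers _
    · exact mem_powers_iff_mem_zpowers.mp ⟨3, aux_xa_pow_three i⟩

lemma aux_zpowers_xa_add_n (i : ZMod (2 * n)) :
    zpowers (xa (i + (n : ZMod (2 * n))) : QuaternionGroup n) = zpowers (xa i) := by
  have hnn : (i + (n : ZMod (2 * n))) + (n : ZMod (2 * n)) = i := by
    have h : ((2 * n : ℕ) : ZMod (2 * n)) = 0 := ZMod.natCast_self _
    push_cast at h
    linear_combination h
  refine le_antisymm (zpowers_le.mpr ?_) (zpowers_le.mpr ?_)
  · rw [aux_mem_zpowers_xa]; tauto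
  · rw [aux_mem_zpowers_xa, hnn]; tauto

lemma aux_a_mem_zpa (i : ZMod (2 * n)) : a i ∈ zpowers (a 1 : QuaternionGroup n) := by
  haveI : NeZero (2 * n) := ⟨by have := NeZero.ne n; omega⟩
  exact mem_powers_iff_mem_zpowers.mp ⟨i.val, by
    change (a 1 : QuaternionGroup n) ^ i.val = a i
    rw [a_one_pow, ZMod.natCast_zmod_val]⟩

lemma aux_xa_not_mem_zpa (i : ZMod (2 * n)) :
    xa i ∉ zpowers (a 1 : QuaternionGroup n) := by
  intro h
  obtain ⟨m, hm⟩ := mem_powers_iff_mem_zpowers.mpr h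
  change (a 1 : QuaternionGroup n) ^ m = xa i at hm
  rw [a_one_pow] at hm
  cases hm

lemma aux_ncard_Sa (r : ℕ) (hn : n = 2 ^ r) :
    {H : Subgroup (QuaternionGroup n) | H ≤ zpowers (a 1)}.ncard = r + 2 := by
  set A : Subgroup (QuaternionGroup n) := zpowers (a 1) with hA
  set Sa : Set (Subgroup (QuaternionGroup n)) := {H | H ≤ A} with hSa
  have hcardA : Nat.card A = 2 * n := by rw [hA, Nat.card_zpowers, orderOf_a_one]
  have hne : 2 * n ≠ 0 := by have := NeZero.ne n; omega
  have hcard_eq : ∀ H : Subgroup (QuaternionGroup n), H ≤ A →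
      Nat.card (H.subgroupOf A) = Nat.card H := fun H hH =>
    Nat.card_congr (subgroupOfEquivOfLe hH).toEquiv
  have hmaps : Set.MapsTo (fun H : Subgroup (QuaternionGroup n) => Nat.card H) Sa
      ↑((2 * n).divisors) := by
    intro H hH
    simp only [Finset.coe_sort_coe, Finset.mem_coe, Nat.mem_divisors]
    refine ⟨?_, hne⟩
    rw [← hcard_eq H hH, ← hcardA]
    exact Subgroup.card_subgroup_dvd_card _
  have hinj : Set.InjOn (fun H : Subgroup (QuaternionGroup n) => Nat.card H) Sa := by
    intro H hH K hK hcard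
    haveI : Fintype ↥A := Fintype.ofFinite _
    haveI : IsCyclic ↥A := aux_isCyclic_zpowers _
    have h1 : H.subgroupOf A = K.subgroupOf A := by
      apply aux_subgroup_eq_of_card_eq
      rw [hcard_eq H hH, hcard_eq K hK]
      exact hcard
    have eH : (H.subgroupOf A).map A.subtype = H := by
      rw [subgroupOf_map_subtype, inf_eq_left.mpr hH]
    have eK : (K.subgroupOf A).map A.subtype = K := by
      rw [subgroupOf_map_subtype, inf_eq_left.mpr hK]
    rw [← eH, ← eK, h1]
  have hsurj : Set.SurjOn (fun H : Subgroup (QuaternionGroup n) => Nat.card H) Sa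
      ↑((2 * n).divisors) := by
    intro d hd
    simp only [Finset.coe_sort_coe, Finset.mem_coe, Nat.mem_divisors] at hd
    obtain ⟨hdvd, -⟩ := hd
    refine ⟨zpowers ((a 1 : QuaternionGroup n) ^ (2 * n / d)),
      zpowers_le.mpr (Subgroup.pow_mem _ (mem_zpowers _) _), ?_⟩
    show Nat.card (zpowers ((a 1 : QuaternionGroup n) ^ (2 * n / d))) = d
    rw [Nat.card_zpowers, orderOf_pow, orderOf_a_one,
      Nat.gcd_eq_right (Nat.div_dvd_of_dvd hdvd), Nat.div_div_self hdvd hne]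
  have himg : (fun H : Subgroup (QuaternionGroup n) => Nat.card H) '' Sa =
      ↑((2 * n).divisors) := Set.Subset.antisymm (Set.mapsTo_iff_image_subset.mp hmaps) hsurj
  rw [← Set.ncard_image_of_injOn hinj, himg, Set.ncard_coe_finset, hn,
    show 2 * 2 ^ r = 2 ^ (r + 1) by ring, Nat.divisors_prime_pow Nat.prime_two,
    Finset.card_map, Finset.card_range]

lemma aux_ncard_Sx :
    (Set.range (fun i : ZMod (2 * n) => zpowers (xa i : QuaternionGroup n))).ncard = n := by
  haveI : NeZero (2 * n) := ⟨by have := NeZero.ne n; omega⟩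
  have key : Set.range (fun i : ZMod (2 * n) => zpowers (xa i : QuaternionGroup n)) =
      (fun k : Fin n => zpowers (xa ((k : ℕ) : ZMod (2 * n)) : QuaternionGroup n)) ''
        Set.univ := by
    ext H
    constructor
    · rintro ⟨i, rfl⟩
      by_cases h : i.val < n
      · exact ⟨⟨i.val, h⟩, trivial, by simp [ZMod.natCast_zmod_val]⟩
      · have hlt : i.val < 2 * n := i.val_lt
        refine ⟨⟨i.val - n, by omega⟩, trivial, ?_⟩
        show zpowers (xa ((i.val - n : ℕ) : ZMod (2 * n)) : QuaternionGroup n) = _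
        have hcast : ((i.val - n : ℕ) : ZMod (2 * n)) = i - (n : ZMod (2 * n)) := by
          rw [Nat.cast_sub (le_of_not_gt h), ZMod.natCast_zmod_val]
        rw [hcast]
        have h2 := aux_zpowers_xa_add_n (n := n) (i - (n : ZMod (2 * n)))
        rw [sub_add_cancel] at h2
        exact h2.symm ▸ rfl
    · rintro ⟨k, -, rfl⟩
      exact ⟨((k : ℕ) : ZMod (2 * n)), rfl⟩
  have hinj : Set.InjOn
      (fun k : Fin n => zpowers (xa ((k : ℕ) : ZMod (2 * n)) : QuaternionGroup n))
      Set.univ := by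
    rintro k - k' - h
    have hmem : (xa ((k' : ℕ) : ZMod (2 * n)) : QuaternionGroup n) ∈
        zpowers (xa ((k : ℕ) : ZMod (2 * n)) : QuaternionGroup n) := by
      simp only at h
      rw [h]; exact mem_zpowers _
    rw [aux_mem_zpowers_xa] at hmem
    have hk : (k : ℕ) < n := k.2
    have hk' : (k' : ℕ) < n := k'.2
    have hnpos : 0 < n := Nat.pos_of_ne_zero (NeZero.ne n)
    rcases hmem with h1 | h1 | h1 | h1
    · exact absurd h1 (by rw [QuaternionGroup.one_def]; exact fun h => by cases h)
    · cases h1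
    · apply Fin.ext
      have := congrArg ZMod.val (QuaternionGroup.xa.inj h1)
      rw [ZMod.val_natCast_of_lt (by omega), ZMod.val_natCast_of_lt (by omega)] at this
      exact this.symm
    · exfalso
      have h2 : ((k' : ℕ) : ZMod (2 * n)) = (((k : ℕ) + n : ℕ) : ZMod (2 * n)) := by
        rw [QuaternionGroup.xa.inj h1]; push_cast; ring
      have := congrArg ZMod.val h2
      rw [ZMod.val_natCast_of_lt (by omega), ZMod.val_natCast_of_lt (by omega)] at this
      omega
  rw [key, Set.ncard_image_of_injOn hinj, Set.ncard_univ, Nat.card_eq_fintype_card,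
    Fintype.card_fin]

end Quaternion

lemma aux_range_zpowers_quaternion (r : ℕ) :
    (Set.range (fun g : QuaternionGroup (2 ^ r) => zpowers g)).ncard
      = 2 ^ r + (r + 2) := by
  haveI : NeZero (2 ^ r) := ⟨pow_ne_zero r two_ne_zero⟩
  set n := 2 ^ r with hn
  have hunion : Set.range (fun g : QuaternionGroup n => zpowers g) =
      {H : Subgroup (QuaternionGroup n) | H ≤ zpowers (a 1)} ∪
      Set.range (fun i : ZMod (2 * n) => zpowers (xa i : QuaternionGroup n)) := by
    ext H
    constructor
    · rintro ⟨g, rfl⟩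
      cases g with
      | a i => exact Or.inl (zpowers_le.mpr (aux_a_mem_zpa i))
      | xa i => exact Or.inr ⟨i, rfl⟩
    · rintro (h | ⟨i, rfl⟩)
      · haveI : IsCyclic ↥(zpowers (a 1 : QuaternionGroup n)) := aux_isCyclic_zpowers _
        haveI hcyc : IsCyclic H := Subgroup.isCyclic_of_le h
        exact (aux_mem_range_zpowers_iff_isCyclic H).mpr hcyc
      · exact ⟨xa i, rfl⟩
  have hdisj : Disjoint {H : Subgroup (QuaternionGroup n) | H ≤ zpowers (a 1)}
      (Set.range (fun i : ZMod (2 * n) => zpowers (xa i : QuaternionGroup n))) := by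
    rw [Set.disjoint_left]
    intro H hH hmem
    obtain ⟨i, hi⟩ := hmem
    rw [← hi] at hH
    exact aux_xa_not_mem_zpa i (hH (mem_zpowers _))
  rw [hunion, Set.ncard_union_eq hdisj (Set.toFinite _) (Set.toFinite _),
    aux_ncard_Sa r hn, aux_ncard_Sx]
  ring

/-- For `p` an odd prime and `r ≥ 1`, the number of cyclic subgroups of
`T_{4·2^r} × C_p` equals `2(2^r + r + 2) = 2^{r+2} p − (2^{r+1}(2p − 1) − 2(r + 2))`. -/
theorem num_cyclic_subgroups_dicyclic_two_pow_prod_cyclic (p r : ℕ) (hp : p.Prime)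
    (hodd : Odd p) (hr : 1 ≤ r) :
    Nat.card {H : Subgroup (QuaternionGroup (2 ^ r) × Multiplicative (ZMod p)) // IsCyclic H} =
      2 * (2 ^ r + r + 2) ∧
    Nat.card {H : Subgroup (QuaternionGroup (2 ^ r) × Multiplicative (ZMod p)) // IsCyclic H} =
      2 ^ (r + 2) * p - (2 ^ (r + 1) * (2 * p - 1) - 2 * (r + 2)) := by
  haveI : NeZero (2 ^ r) := ⟨pow_ne_zero r two_ne_zero⟩
  haveI : Fact p.Prime := ⟨hp⟩
  haveI : NeZero p := ⟨hp.ne_zero⟩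
  have hcardG : Nat.card (QuaternionGroup (2 ^ r)) = 4 * 2 ^ r := by
    rw [Nat.card_eq_fintype_card, QuaternionGroup.card]
  have hcardK : Nat.card (Multiplicative (ZMod p)) = p := by
    simp [Nat.card_eq_fintype_card]
  have hco : Nat.Coprime (Nat.card (QuaternionGroup (2 ^ r)))
      (Nat.card (Multiplicative (ZMod p))) := by
    rw [hcardG, hcardK, show (4 : ℕ) * 2 ^ r = 2 ^ (r + 2) by ring]
    refine Nat.Coprime.pow_left _ ?_
    rw [Nat.Prime.coprime_iff_not_dvd Nat.prime_two]
    exact fun hdvd => (Nat.not_even_iff_odd.mpr hodd) ((even_iff_two_dvd).mpr hdvd)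
  have hmain : Nat.card
      {H : Subgroup (QuaternionGroup (2 ^ r) × Multiplicative (ZMod p)) // IsCyclic H} =
      2 * (2 ^ r + r + 2) := by
    rw [aux_card_cyclic_subgroups, aux_range_zpowers_prod hco,
      aux_range_zpowers_quaternion, aux_range_zpowers_zmod p hp]
    ring
  refine ⟨hmain, hmain.trans ?_⟩
  have hp3 : 3 ≤ p := by
    have h2 := hp.two_le
    have hne : p ≠ 2 := by rintro rfl; exact (by decide : ¬ Odd 2) hodd
    omega
  set a := 2 ^ (r + 1) with ha
  have h2a : 2 ^ (r + 2) = 2 * a := by rw [ha]; ring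
  have hsub : a * (2 * p - 1) = 2 * a * p - a := by
    have : 2 * p - 1 + 1 = 2 * p := by omega
    have h1 : a * (2 * p - 1) + a = 2 * a * p := by
      calc a * (2 * p - 1) + a = a * ((2 * p - 1) + 1) := by ring
        _ = a * (2 * p) := by rw [this]
        _ = 2 * a * p := by ring
    omega
  rw [h2a, hsub]
  have hX : 6 * a ≤ 2 * a * p := by
    calc 6 * a = 2 * a * 3 := by ring
      _ ≤ 2 * a * p := Nat.mul_le_mul_left _ hp3
  have har : r + 1 < a := by
    rw [ha]
    exact Nat.lt_two_pow_self
  have h2r : 2 ^ r + 2 ^ r = a := by rw [ha]; ring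
  omega
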